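/- For every n ∈ ω, the class of Heyting algebras with incomparability degree at most n is a variety, axiomatized by the finite set of equations Σ_n consisting of δ_{n,k} ≈ 1 for each of the finitely many posets Z_{n,k} on the set {y_1,…,y_{n+1}}, where δ_{n,k} = ψ_{n,k} ∨ (x → ⋁_{i=1}^{n+1} y_i) and ψ_{n,k} = ⋁_{i=1}^{n+1} (y_i → (x ∨ ⋁_{j : y_i ≰_k y_j} y_j)) (an empty disjunction being 0). -/

import Mathlib

/- STATEMENT 14: For every n, the class of Heyting algebras with incomparability degree
at most n is a variety, axiomatized by the equations δ_{n,k} ≈ 1, one for each poset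
on the set {y_1, …, y_{n+1}}. -/

/-- A bundled Heyting algebra. -/
structure HAlg where
  carrier : Type
  [str : HeytingAlgebra carrier]

attribute [instance] HAlg.str

/-- Heyting terms over countably many variables. -/
inductive HTerm : Type
  | var : ℕ → HTerm
  | bot : HTerm
  | top : HTerm
  | inf : HTerm → HTerm → HTerm
  | sup : HTerm → HTerm → HTerm
  | himp : HTerm → HTerm → HTerm

/-- Evaluation of a Heyting term in a Heyting algebra. -/
def HTerm.eval {α : Type} [HeytingAlgebra α] (v : ℕ → α) : HTerm → α
  | HTerm.var i => v i
  | HTerm.bot => ⊥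
  | HTerm.top => ⊤
  | HTerm.inf t s => t.eval v ⊓ s.eval v
  | HTerm.sup t s => t.eval v ⊔ s.eval v
  | HTerm.himp t s => t.eval v ⇨ s.eval v

/-- The equation t ≈ s holds in α. -/
def Models (α : Type) [HeytingAlgebra α] (t s : HTerm) : Prop :=
  ∀ v : ℕ → α, t.eval v = s.eval v

/-- A class of Heyting algebras. -/
def HAClass : Type 1 := HAlg → Prop

/-- A variety of Heyting algebras: an equationally axiomatized class. -/
def IsVariety (K : HAClass) : Prop :=
  ∃ E : Set (HTerm × HTerm), ∀ A : HAlg, K A ↔ ∀ p ∈ E, Models A.carrier p.1 p.2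

/-- `f` is an epimorphism in the category of members of `K` with Heyting homomorphisms. -/
def IsEpiIn (K : HAClass) {α β : Type} [HeytingAlgebra α] [HeytingAlgebra β]
    (f : HeytingHom α β) : Prop :=
  ∀ C : HAlg, K C → ∀ g h : HeytingHom β C.carrier, g.comp f = h.comp f → g = h

/-- `K` has the ES property: every epimorphism between members of `K` is surjective. -/
def HasES (K : HAClass) : Prop :=
  ∀ A B : HAlg, K A → K B → ∀ f : HeytingHom A.carrier B.carrier,
    IsEpiIn K f → Function.Surjective f

/-- A prime filter of a Heyting algebra: a nonempty proper upward-closed subset, closed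
under meets, such that x ⊔ y ∈ F implies x ∈ F or y ∈ F. -/
def IsPrimeFilter {α : Type} [HeytingAlgebra α] (F : Set α) : Prop :=
  F.Nonempty ∧ F ≠ Set.univ ∧
  (∀ x ∈ F, ∀ y, x ≤ y → y ∈ F) ∧
  (∀ x ∈ F, ∀ y ∈ F, x ⊓ y ∈ F) ∧
  (∀ x y : α, x ⊔ y ∈ F → x ∈ F ∨ y ∈ F)

/-- Width at most n: in the dual Esakia space (prime filters ordered by inclusion),
no upset ↑F contains an antichain of n+1 elements. -/
def WidthAtMost (n : ℕ) (A : HAlg) : Prop :=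
  ∀ F : Set A.carrier, IsPrimeFilter F →
    ∀ G : Fin (n + 1) → Set A.carrier,
      (∀ i, IsPrimeFilter (G i) ∧ F ⊆ G i) →
      (∀ i j, i ≠ j → ¬ G i ⊆ G j) → False

/-- Membership in the subalgebra generated by S. -/
inductive InSubalg {α : Type} [HeytingAlgebra α] (S : Set α) : α → Prop
  | mem : ∀ {a}, a ∈ S → InSubalg S a
  | bot : InSubalg S ⊥
  | top : InSubalg S ⊤
  | inf : ∀ {a b}, InSubalg S a → InSubalg S b → InSubalg S (a ⊓ b)
  | sup : ∀ {a b}, InSubalg S a → InSubalg S b → InSubalg S (a ⊔ b)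
  | himp : ∀ {a b}, InSubalg S a → InSubalg S b → InSubalg S (a ⇨ b)

attribute [local instance] Classical.propDecidable

/-- Incomparability degree at most n: in the dual space, no upset ↑F contains a point G
which is incomparable with n+1 elements of ↑F. -/
def IncompAtMost (n : ℕ) (A : HAlg) : Prop :=
  ∀ F : Set A.carrier, IsPrimeFilter F →
    ∀ G : Set A.carrier, IsPrimeFilter G → F ⊆ G →
      ∀ H : Fin (n + 1) → Set A.carrier,
        (∀ i, IsPrimeFilter (H i) ∧ F ⊆ H i) →
        (∀ i, ¬ G ⊆ H i ∧ ¬ H i ⊆ G) →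
        (∀ i j, i ≠ j → H i ≠ H j) → False

/-- Finite disjunction of a list of terms (empty disjunction is ⊥). -/
def bigSup (l : List HTerm) : HTerm := l.foldr HTerm.sup HTerm.bot

/-- With x = var 0 and y_i = var (i+1): the term
ψ_{n,r} = ⋁_{i=1}^{n+1} (y_i → (x ∨ ⋁_{j : y_i ≰ y_j} y_j)) for a relation r on Fin (n+1). -/
noncomputable def psiTerm (n : ℕ) (r : Fin (n + 1) → Fin (n + 1) → Prop) : HTerm :=
  bigSup ((List.finRange (n + 1)).map (fun i =>
    HTerm.himp (HTerm.var (i.val + 1))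
      (HTerm.sup (HTerm.var 0)
        (bigSup (((List.finRange (n + 1)).filter (fun j => decide (¬ r i j))).map
          (fun j => HTerm.var (j.val + 1)))))))

/-- δ_{n,r} = ψ_{n,r} ∨ (x → ⋁_{i=1}^{n+1} y_i). -/
noncomputable def deltaTerm (n : ℕ) (r : Fin (n + 1) → Fin (n + 1) → Prop) : HTerm :=
  HTerm.sup (psiTerm n r)
    (HTerm.himp (HTerm.var 0)
      (bigSup ((List.finRange (n + 1)).map (fun i => HTerm.var (i.val + 1)))))

section Aux
variable {α : Type} [HeytingAlgebra α]

/-- A (not necessarily proper) lattice filter. -/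
def IsFilt (F : Set α) : Prop :=
  F.Nonempty ∧ (∀ x ∈ F, ∀ y, x ≤ y → y ∈ F) ∧ (∀ x ∈ F, ∀ y ∈ F, x ⊓ y ∈ F)

theorem primefilter_extension {F : Set α} (hF : IsFilt F) {d : α} (hd : d ∉ F) :
    ∃ G : Set α, IsPrimeFilter G ∧ F ⊆ G ∧ d ∉ G := by
  obtain ⟨hne, hup, hinf⟩ := hF
  set S : Set (Set α) := {G | IsFilt G ∧ F ⊆ G ∧ d ∉ G} with hS
  have hFS : F ∈ S := ⟨⟨hne, hup, hinf⟩, subset_rfl, hd⟩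
  obtain ⟨G, hFG, hGS, hmax⟩ := zorn_subset_nonempty S (fun c hcS hc hcne => by
      refine ⟨⋃₀ c, ⟨⟨?_, ?_, ?_⟩, ?_, ?_⟩, fun s hs => Set.subset_sUnion_of_mem hs⟩
      · obtain ⟨s, hs⟩ := hcne
        obtain ⟨x, hx⟩ := (hcS hs).1.1
        exact ⟨x, s, hs, hx⟩
      · rintro x ⟨s, hs, hxs⟩ y hxy
        exact ⟨s, hs, (hcS hs).1.2.1 x hxs y hxy⟩
      · rintro x ⟨s, hs, hxs⟩ y ⟨t, ht, hyt⟩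
        rcases hc.total hs ht with h | h
        · exact ⟨t, ht, (hcS ht).1.2.2 x (h hxs) y hyt⟩
        · exact ⟨s, hs, (hcS hs).1.2.2 x hxs y (h hyt)⟩
      · obtain ⟨s, hs⟩ := hcne
        exact (hcS hs).2.1.trans (Set.subset_sUnion_of_mem hs)
      · rintro ⟨s, hs, hds⟩
        exact (hcS hs).2.2 hds) F hFS
  obtain ⟨⟨hGne, hGup, hGinf⟩, hFsub, hdG⟩ := hGS
  refine ⟨G, ⟨hGne, ?_, hGup, hGinf, ?_⟩, hFsub, hdG⟩
  · intro h
    exact hdG (h ▸ Set.mem_univ d)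
  · intro a b hab
    by_contra hcon
    push_neg at hcon
    obtain ⟨ha, hb⟩ := hcon
    -- the filter generated by G and a contains d
    have key : ∀ x : α, x ∉ G → ∃ g ∈ G, g ⊓ x ≤ d := by
      intro x hx
      set Gx : Set α := {e | ∃ g ∈ G, g ⊓ x ≤ e} with hGx
      have hGsub : G ⊆ Gx := fun g hg => ⟨g, hg, inf_le_left⟩
      have hxGx : x ∈ Gx := by
        obtain ⟨g, hg⟩ := hGne
        exact ⟨g, hg, inf_le_right⟩
      have hfilt : IsFilt Gx := by
        refine ⟨⟨x, hxGx⟩, ?_, ?_⟩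
        · rintro e ⟨g, hg, hge⟩ y hey
          exact ⟨g, hg, hge.trans hey⟩
        · rintro e ⟨g, hg, hge⟩ e' ⟨g', hg', hge'⟩
          refine ⟨g ⊓ g', hGinf g hg g' hg', ?_⟩
          calc g ⊓ g' ⊓ x ≤ (g ⊓ x) ⊓ (g' ⊓ x) := by
                refine le_inf (inf_le_inf_right x inf_le_left) (inf_le_inf_right x inf_le_right)
            _ ≤ e ⊓ e' := inf_le_inf hge hge'
      by_cases hdx : d ∈ Gx
      · exact hdx
      · exfalso
        have : Gx ∈ S := ⟨hfilt, hFsub.trans hGsub, hdx⟩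
        have := hmax this hGsub
        exact hx (this hxGx)
    obtain ⟨g1, hg1, h1⟩ := key a ha
    obtain ⟨g2, hg2, h2⟩ := key b hb
    have hg12 : g1 ⊓ g2 ∈ G := hGinf g1 hg1 g2 hg2
    have hmem : (g1 ⊓ g2) ⊓ (a ⊔ b) ∈ G := hGinf _ hg12 _ hab
    have hle : (g1 ⊓ g2) ⊓ (a ⊔ b) ≤ d := by
      rw [inf_sup_left]
      refine sup_le ?_ ?_
      · exact le_trans (inf_le_inf_right a inf_le_left) h1
      · exact le_trans (inf_le_inf_right b inf_le_right) h2
    exact hdG (hGup _ hmem d hle)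

theorem top_mem_primefilter {F : Set α} (hF : IsPrimeFilter F) : (⊤ : α) ∈ F := by
  obtain ⟨⟨x, hx⟩, _, hup, _⟩ := hF
  exact hup x hx ⊤ le_top

theorem bot_not_mem_primefilter {F : Set α} (hF : IsPrimeFilter F) : (⊥ : α) ∉ F := by
  obtain ⟨_, hne, hup, _⟩ := hF
  intro hb
  exact hne (Set.eq_univ_of_forall fun x => hup ⊥ hb x bot_le)

theorem himp_witness {F : Set α} (hF : IsPrimeFilter F) {c d : α} (h : c ⇨ d ∉ F) :
    ∃ G : Set α, IsPrimeFilter G ∧ F ⊆ G ∧ c ∈ G ∧ d ∉ G := by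
  obtain ⟨hne, hproper, hup, hinf, hprime⟩ := hF
  set F1 : Set α := {e | ∃ f ∈ F, f ⊓ c ≤ e} with hF1
  have hsub : F ⊆ F1 := fun f hf => ⟨f, hf, inf_le_left⟩
  have hcF1 : c ∈ F1 := by
    obtain ⟨f, hf⟩ := hne
    exact ⟨f, hf, inf_le_right⟩
  have hfilt : IsFilt F1 := by
    refine ⟨⟨c, hcF1⟩, ?_, ?_⟩
    · rintro e ⟨f, hf, hfe⟩ y hey
      exact ⟨f, hf, hfe.trans hey⟩
    · rintro e ⟨f, hf, hfe⟩ e' ⟨f', hf', hfe'⟩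
      refine ⟨f ⊓ f', hinf f hf f' hf', ?_⟩
      calc f ⊓ f' ⊓ c ≤ (f ⊓ c) ⊓ (f' ⊓ c) :=
            le_inf (inf_le_inf_right c inf_le_left) (inf_le_inf_right c inf_le_right)
        _ ≤ e ⊓ e' := inf_le_inf hfe hfe'
  have hdF1 : d ∉ F1 := by
    rintro ⟨f, hf, hfd⟩
    exact h (hup f hf (c ⇨ d) (le_himp_iff.2 hfd))
  obtain ⟨G, hG, hsub', hdG⟩ := primefilter_extension hfilt hdF1
  exact ⟨G, hG, hsub.trans hsub', hsub' hcF1, hdG⟩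

/-- Easy direction of the himp canonical lemma. -/
theorem himp_elim {F G : Set α} (hG : IsPrimeFilter G) (hFG : F ⊆ G) {c d : α}
    (h : c ⇨ d ∈ F) (hc : c ∈ G) : d ∈ G := by
  obtain ⟨_, _, hup, hinf, _⟩ := hG
  have : c ⊓ (c ⇨ d) ∈ G := hinf c hc _ (hFG h)
  exact hup _ this d (by simp)

end Aux

section AuxTerm
variable {α : Type} [HeytingAlgebra α]

theorem le_bigSup_eval (v : ℕ → α) {t : HTerm} {l : List HTerm} (ht : t ∈ l) :
    t.eval v ≤ (bigSup l).eval v := by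
  induction l with
  | nil => simp at ht
  | cons s l ih =>
    rcases List.mem_cons.1 ht with h | h
    · subst h; exact le_sup_left
    · exact (ih h).trans le_sup_right

theorem bigSup_mem_elim {G : Set α} (hG : IsPrimeFilter G) (v : ℕ → α) {l : List HTerm}
    (h : (bigSup l).eval v ∈ G) : ∃ t ∈ l, t.eval v ∈ G := by
  induction l with
  | nil => exact absurd h (bot_not_mem_primefilter hG)
  | cons s l ih =>
    rcases hG.2.2.2.2 _ _ h with h' | h'
    · exact ⟨s, List.mem_cons_self, h'⟩
    · obtain ⟨t, ht, ht'⟩ := ih h'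
      exact ⟨t, List.mem_cons_of_mem s ht, ht'⟩

theorem finsetInf_mem {G : Set α} (hG : IsPrimeFilter G) {ι : Type} [DecidableEq ι]
    (s : Finset ι) (f : ι → α) (h : ∀ i ∈ s, f i ∈ G) : s.inf f ∈ G := by
  induction s using Finset.induction_on with
  | empty => simpa using top_mem_primefilter hG
  | @insert a s hnot ih =>
    rw [Finset.inf_insert]
    exact hG.2.2.2.1 _ (h a (Finset.mem_insert_self a s)) _
      (ih fun i hi => h i (Finset.mem_insert_of_mem hi))

end AuxTerm

theorem incomp_backward (n : ℕ) (A : HAlg)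
    (h : ∀ r : Fin (n + 1) → Fin (n + 1) → Prop, IsPartialOrder (Fin (n + 1)) r →
      Models A.carrier (deltaTerm n r) HTerm.top) : IncompAtMost n A := by
  intro F hF G hG hFG H hH hInc hNe
  set r : Fin (n + 1) → Fin (n + 1) → Prop := fun i j => H j ⊆ H i with hrdef
  have hr : IsPartialOrder (Fin (n + 1)) r :=
    { refl := fun i => subset_rfl
      trans := fun i j k h1 h2 => h2.trans h1
      antisymm := fun i j h1 h2 => by
        by_contra hij
        exact hNe i j hij (Set.Subset.antisymm h2 h1) }
  choose a haG haH using fun i => Set.not_subset.1 (hInc i).1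
  choose b hbH hbG using fun i => Set.not_subset.1 (hInc i).2
  have hc : ∀ j i : Fin (n + 1), ∃ cji : A.carrier,
      cji ∈ H j ∧ (¬ H j ⊆ H i → cji ∉ H i) := by
    intro j i
    by_cases hji : H j ⊆ H i
    · exact ⟨b j, hbH j, fun h' => absurd hji h'⟩
    · obtain ⟨cji, hc1, hc2⟩ := Set.not_subset.1 hji
      exact ⟨cji, hc1, fun _ => hc2⟩
  choose c hcH hcI using hc
  set x0 : A.carrier := Finset.univ.inf a with hx0
  set y : Fin (n + 1) → A.carrier := fun j => b j ⊓ Finset.univ.inf (c j) with hy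
  set v : ℕ → A.carrier := fun k => match k with
    | 0 => x0
    | m + 1 => if hm : m < n + 1 then y ⟨m, hm⟩ else ⊤ with hv
  have hv0 : v 0 = x0 := rfl
  have hvy : ∀ i : Fin (n + 1), v (i.val + 1) = y i := by
    intro i
    show (if hm : i.val < n + 1 then y ⟨i.val, hm⟩ else ⊤) = y i
    rw [dif_pos i.isLt]
  -- properties of x0 and y
  have hx0G : x0 ∈ G := finsetInf_mem hG _ _ fun i _ => haG i
  have hx0H : ∀ i, x0 ∉ H i := by
    intro i hx
    exact haH i (((hH i).1).2.2.1 x0 hx (a i) (Finset.inf_le (Finset.mem_univ i)))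
  have hyH : ∀ j, y j ∈ H j := by
    intro j
    exact ((hH j).1).2.2.2.1 _ (hbH j) _ (finsetInf_mem (hH j).1 _ _ fun i _ => hcH j i)
  have hyG : ∀ j, y j ∉ G := by
    intro j hyj
    exact hbG j (hG.2.2.1 _ hyj _ inf_le_left)
  have hyHi : ∀ i j, ¬ H j ⊆ H i → y j ∉ H i := by
    intro i j hij hyj
    exact hcI j i hij (((hH i).1).2.2.1 _ hyj _
      (le_trans inf_le_right (Finset.inf_le (Finset.mem_univ i))))
  -- the equation
  have hδ : (deltaTerm n r).eval v = ⊤ := h r hr v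
  have hδF : (psiTerm n r).eval v ⊔ (HTerm.himp (HTerm.var 0)
      (bigSup ((List.finRange (n + 1)).map (fun i => HTerm.var (i.val + 1))))).eval v ∈ F := by
    have : (deltaTerm n r).eval v ∈ F := hδ ▸ top_mem_primefilter hF
    exact this
  rcases hF.2.2.2.2 _ _ hδF with hψ | himp
  · -- some disjunct of ψ is in F
    rw [psiTerm] at hψ
    obtain ⟨t, ht, htF⟩ := bigSup_mem_elim hF v hψ
    obtain ⟨i, _, rfl⟩ := List.mem_map.1 ht
    have hmem : (HTerm.var 0).eval v ⊔ (bigSup (((List.finRange (n + 1)).filter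
        (fun j => decide (¬ r i j))).map (fun j => HTerm.var (j.val + 1)))).eval v ∈ H i := by
      have := himp_elim (hH i).1 (hH i).2 htF (c := (HTerm.var (i.val + 1)).eval v)
        (by show v (i.val + 1) ∈ H i; rw [hvy]; exact hyH i)
      exact this
    rcases ((hH i).1).2.2.2.2 _ _ hmem with h0 | hQ
    · exact hx0H i h0
    · obtain ⟨t, ht, htH⟩ := bigSup_mem_elim (hH i).1 v hQ
      obtain ⟨j, hj, rfl⟩ := List.mem_map.1 ht
      have hrij : ¬ r i j := of_decide_eq_true (List.mem_filter.1 hj).2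
      have : v (j.val + 1) ∈ H i := htH
      rw [hvy] at this
      exact hyHi i j hrij this
  · -- the implication is in F, use G
    have hsupG : (bigSup ((List.finRange (n + 1)).map
        (fun i => HTerm.var (i.val + 1)))).eval v ∈ G := by
      have := himp_elim hG hFG himp (c := (HTerm.var 0).eval v) hx0G
      exact this
    obtain ⟨t, ht, htG⟩ := bigSup_mem_elim hG v hsupG
    obtain ⟨i, _, rfl⟩ := List.mem_map.1 ht
    have : v (i.val + 1) ∈ G := htG
    rw [hvy] at this
    exact hyG i this

theorem incomp_forward (n : ℕ) (A : HAlg) (hI : IncompAtMost n A)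
    (r : Fin (n + 1) → Fin (n + 1) → Prop) (hr : IsPartialOrder (Fin (n + 1)) r) :
    Models A.carrier (deltaTerm n r) HTerm.top := by
  intro v
  show (deltaTerm n r).eval v = ⊤
  by_contra hne
  have htopF : IsFilt ({⊤} : Set A.carrier) := by
    refine ⟨⟨⊤, rfl⟩, ?_, ?_⟩
    · rintro x rfl y hy
      exact top_le_iff.1 hy
    · rintro x rfl y rfl
      simp
  have hd : (deltaTerm n r).eval v ∉ ({⊤} : Set A.carrier) := by simpa using hne
  obtain ⟨F, hF, _, hdF⟩ := primefilter_extension htopF hd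
  have hδeq : (deltaTerm n r).eval v = (psiTerm n r).eval v ⊔
      (HTerm.himp (HTerm.var 0) (bigSup ((List.finRange (n + 1)).map
        (fun i => HTerm.var (i.val + 1))))).eval v := rfl
  rw [hδeq] at hdF
  have hψF : (psiTerm n r).eval v ∉ F := by
    intro h
    exact hdF (hF.2.2.1 _ h _ le_sup_left)
  have himpF : (HTerm.himp (HTerm.var 0) (bigSup ((List.finRange (n + 1)).map
      (fun i => HTerm.var (i.val + 1))))).eval v ∉ F := by
    intro h
    exact hdF (hF.2.2.1 _ h _ le_sup_right)
  -- G
  obtain ⟨G, hG, hFG, hx0G, hsupG⟩ := himp_witness hF himpF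
  have hyG : ∀ i : Fin (n + 1), v (i.val + 1) ∉ G := by
    intro i hi
    refine hsupG (hG.2.2.1 _ hi _ ?_)
    exact le_bigSup_eval (t := HTerm.var (i.val + 1)) v
      (List.mem_map.2 ⟨i, List.mem_finRange i, rfl⟩)
  -- H i
  have hHex : ∀ i : Fin (n + 1), ∃ Hi : Set A.carrier, IsPrimeFilter Hi ∧ F ⊆ Hi ∧
      v (i.val + 1) ∈ Hi ∧ (HTerm.sup (HTerm.var 0) (bigSup (((List.finRange (n + 1)).filter
        (fun j => decide (¬ r i j))).map (fun j => HTerm.var (j.val + 1))))).eval v ∉ Hi := by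
    intro i
    have hDi : (HTerm.himp (HTerm.var (i.val + 1)) (HTerm.sup (HTerm.var 0)
        (bigSup (((List.finRange (n + 1)).filter (fun j => decide (¬ r i j))).map
          (fun j => HTerm.var (j.val + 1)))))).eval v ∉ F := by
      intro h
      refine hψF (hF.2.2.1 _ h _ ?_)
      rw [psiTerm]
      exact le_bigSup_eval v (List.mem_map.2 ⟨i, List.mem_finRange i, rfl⟩)
    exact himp_witness hF hDi
  choose H hH1 hH2 hH3 hH4 using hHex
  have hx0H : ∀ i, v 0 ∉ H i := by
    intro i hi
    exact hH4 i ((hH1 i).2.2.1 _ hi _ le_sup_left)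
  have hyHi : ∀ i j, ¬ r i j → v (j.val + 1) ∉ H i := by
    intro i j hij hji
    refine hH4 i ((hH1 i).2.2.1 _ hji _ (le_trans ?_ le_sup_right))
    refine le_bigSup_eval (t := HTerm.var (j.val + 1)) v (List.mem_map.2 ⟨j, ?_, rfl⟩)
    exact List.mem_filter.2 ⟨List.mem_finRange j, decide_eq_true hij⟩
  refine hI F hF G hG hFG H (fun i => ⟨hH1 i, hH2 i⟩) ?_ ?_
  · intro i
    constructor
    · exact Set.not_subset.2 ⟨v 0, hx0G, hx0H i⟩
    · exact Set.not_subset.2 ⟨v (i.val + 1), hH3 i, hyG i⟩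
  · intro i j hij hHeq
    have : ¬ r i j ∨ ¬ r j i := by
      by_contra hcon
      push_neg at hcon
      exact hij (hr.antisymm i j hcon.1 hcon.2)
    rcases this with h' | h'
    · exact hyHi i j h' (hHeq ▸ hH3 j)
    · exact hyHi j i h' (hHeq ▸ hH3 i)

theorem incomp_degree_axiomatization (n : ℕ) :
    (∀ A : HAlg, IncompAtMost n A ↔
      ∀ r : Fin (n + 1) → Fin (n + 1) → Prop, IsPartialOrder (Fin (n + 1)) r →
        Models A.carrier (deltaTerm n r) HTerm.top) ∧
    IsVariety (fun A => IncompAtMost n A) := by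
  have main : ∀ A : HAlg, IncompAtMost n A ↔
      ∀ r : Fin (n + 1) → Fin (n + 1) → Prop, IsPartialOrder (Fin (n + 1)) r →
        Models A.carrier (deltaTerm n r) HTerm.top :=
    fun A => ⟨incomp_forward n A, incomp_backward n A⟩
  refine ⟨main, ?_⟩
  refine ⟨{p | ∃ r : Fin (n + 1) → Fin (n + 1) → Prop, IsPartialOrder (Fin (n + 1)) r ∧
    p = (deltaTerm n r, HTerm.top)}, fun A => ?_⟩
  show IncompAtMost n A ↔ _
  rw [main A]
  constructor
  · rintro h p ⟨r, hr, rfl⟩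
    exact h r hr
  · intro h r hr
    exact h (deltaTerm n r, HTerm.top) ⟨r, hr, rfl⟩
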